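/- Let n ≥ 4 and let W ⊆ V(H_n) contain exactly one vertex v_{i,w_i} from each column C_i. If the associated sign sequence σ^W = s_0…s_{n−1}, where s_i = w_{i+1} − w_i for 0 ≤ i ≤ n−2 and s_{n−1} = −w_0 − w_{n−1} (arithmetic in Z_3), is good, then the replicated graph H_n(W) is 4-colourable. -/

import Mathlib

/-!
A σ-stroll `π₀, …, πₙ` from `({1,2},{3},{4})` to `({1,2},{4},{3})` colours `H n (W)` column
by column: `v i j` takes a colour from part `j - w i` of `πᵢ` (part `0` is the pair, parts `1`,
`2` the singletons), so `v i (w i)` and its clone share the pair and get its two colours.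
Consecutive patterns of a stroll are compatible for the sign `w (i+1) - w i`, which makes the
rungs proper; the end pattern is the start pattern with its parts indexed by `-t`, so the last
sign `-w 0 - w (n-1)` makes the twisted edges proper as well.
-/

/-- Replicating a set `W` of vertices of `G`: each `w ∈ W` gets a clone (the
corresponding element of `Sum.inr`) adjacent to `w` and to all its neighbours. -/
def SimpleGraph.replicateSet {V : Type} (G : SimpleGraph V) (W : Set V) :
    SimpleGraph (V ⊕ W) where
  Adj x y :=
    match x, y with
    | Sum.inl a, Sum.inl b => G.Adj a b
    | Sum.inl a, Sum.inr b => G.Adj a (b : V) ∨ a = (b : V)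
    | Sum.inr a, Sum.inl b => G.Adj (a : V) b ∨ (a : V) = b
    | Sum.inr a, Sum.inr b => G.Adj (a : V) (b : V)
  symm := by
    constructor
    rintro (a | a) (b | b) h <;> simp only at h ⊢ <;>
      first
        | exact G.adj_symm h
        | (rcases h with h | h
           · exact Or.inl (G.adj_symm h)
           · exact Or.inr h.symm)
  loopless := by
    constructor
    rintro (a | a) h <;> simp only at h <;> exact G.irrefl h

/-- Gallai's graph `H n`: the Cartesian product of the path on `Fin n` with the
triangle on `ZMod 3`, together with the three twist edges joining `(0, j)` to
`(n-1, -j)`. -/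
def Hgraph (n : ℕ) : SimpleGraph (Fin n × ZMod 3) :=
  SimpleGraph.fromRel (fun x y =>
    (x.1 = y.1 ∧ x.2 ≠ y.2) ∨
    ((x.1 : ℕ) + 1 = (y.1 : ℕ) ∧ x.2 = y.2) ∨
    ((x.1 : ℕ) = 0 ∧ (y.1 : ℕ) = n - 1 ∧ y.2 = -x.2))

/-- `G` is `k`-critical: `χ(G) = k` and deleting any vertex leaves a
`(k-1)`-colourable graph. -/
def SimpleGraph.IsCrit {V : Type} (G : SimpleGraph V) (k : ℕ) : Prop :=
  G.chromaticNumber = k ∧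
    ∀ v : V, (SimpleGraph.induce {u | u ≠ v} G).Colorable (k - 1)

/-- A pattern: a cyclically ordered partition of the four colours (here
`Fin 4`) into a pair and two singletons, recorded canonically as the pair
followed by the two singletons `{x}`, `{y}` in cyclic order. -/
structure Pattern where
  pair : Finset (Fin 4)
  x : Fin 4
  y : Fin 4
  pair_card : pair.card = 2
  x_not_mem : x ∉ pair
  y_not_mem : y ∉ pair
  x_ne_y : x ≠ y
deriving DecidableEq

/-- `ρ` is `+`-compatible with `π`: either `ρ = π`, or `ρ` is obtained from `π`
by moving one of the paired colours to the preceding part (in cyclic order). -/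
def PlusCompat (π ρ : Pattern) : Prop :=
  ρ = π ∨ ∃ u ∈ π.pair, ∃ v ∈ π.pair, u ≠ v ∧
    ρ.pair = {π.y, u} ∧ ρ.x = v ∧ ρ.y = π.x

/-- `π` and `ρ` are `0`-compatible: the pair of `ρ` consists of the two colours
unpaired in `π`, and vice versa (this relation is symmetric; these are the
undirected edges of the auxiliary graph `D`). -/
def ZeroCompat (π ρ : Pattern) : Prop :=
  ρ.pair = {π.x, π.y} ∧ π.pair = {ρ.x, ρ.y}

/-- `IsStroll σ π τ`: there is a `σ`-stroll in the auxiliary graph `D` from the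
pattern `π` to the pattern `τ`.  Signs are elements of `ZMod 3`, with `1`
standing for `+` and `2` for `−`. -/
inductive IsStroll : List (ZMod 3) → Pattern → Pattern → Prop
  | nil (π : Pattern) : IsStroll [] π π
  | zero {σ : List (ZMod 3)} {π ρ τ : Pattern} :
      ZeroCompat π ρ → IsStroll σ ρ τ → IsStroll (0 :: σ) π τ
  | plus {σ : List (ZMod 3)} {π ρ τ : Pattern} :
      PlusCompat π ρ → IsStroll σ ρ τ → IsStroll (1 :: σ) π τ
  | minus {σ : List (ZMod 3)} {π ρ τ : Pattern} :
      PlusCompat ρ π → IsStroll σ ρ τ → IsStroll (2 :: σ) π τ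

/-- The pattern `({1,2},{3},{4})`. -/
def basePattern : Pattern :=
  ⟨{0, 1}, 2, 3, by decide, by decide, by decide, by decide⟩

/-- The pattern `({1,2},{4},{3})`. -/
def goodEnd : Pattern :=
  ⟨{0, 1}, 3, 2, by decide, by decide, by decide, by decide⟩

/-- The pattern `({3,4},{1},{2})`. -/
def reversingEnd : Pattern :=
  ⟨{2, 3}, 0, 1, by decide, by decide, by decide, by decide⟩

/-- A sign sequence is good if some stroll runs from `({1,2},{3},{4})` to
`({1,2},{4},{3})`. -/
def GoodSeq (σ : List (ZMod 3)) : Prop := IsStroll σ basePattern goodEnd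

/-- A sign sequence is reversing if some stroll runs from `({1,2},{3},{4})` to
`({3,4},{1},{2})`. -/
def ReversingSeq (σ : List (ZMod 3)) : Prop := IsStroll σ basePattern reversingEnd

lemma ZMod.three_cases (t : ZMod 3) : t = 0 ∨ t = 1 ∨ t = 2 := by decide +revert

namespace Pattern

variable (π : Pattern)

lemma x_ne_of_mem_pair {c : Fin 4} (h : c ∈ π.pair) : π.x ≠ c :=
  fun e => π.x_not_mem (e ▸ h)

lemma y_ne_of_mem_pair {c : Fin 4} (h : c ∈ π.pair) : π.y ≠ c :=
  fun e => π.y_not_mem (e ▸ h)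

def part : ZMod 3 → Finset (Fin 4) := ![π.pair, {π.x}, {π.y}]

@[simp] lemma part_zero : π.part 0 = π.pair := rfl
@[simp] lemma part_one : π.part 1 = {π.x} := rfl
@[simp] lemma part_two : π.part 2 = {π.y} := rfl

lemma part_nonempty (t : ZMod 3) : (π.part t).Nonempty := by
  rcases ZMod.three_cases t with rfl | rfl | rfl <;> simp [← Finset.card_pos, π.pair_card]

lemma disjoint_part {t t' : ZMod 3} (h : t ≠ t') : Disjoint (π.part t) (π.part t') := by
  rcases ZMod.three_cases t with rfl | rfl | rfl <;>
    rcases ZMod.three_cases t' with rfl | rfl | rfl <;>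
    simp [π.x_not_mem, π.y_not_mem, π.x_ne_y, π.x_ne_y.symm] at h ⊢

def Compatible (s : ZMod 3) (ρ : Pattern) : Prop :=
  ∀ t, Disjoint (π.part t) (ρ.part (t - s))

end Pattern

lemma ZeroCompat.compatible {π ρ : Pattern} (h : ZeroCompat π ρ) : π.Compatible 0 ρ := by
  obtain ⟨hρ, hπ⟩ := h
  have hx : ρ.x ∈ π.pair := by simp [hπ]
  have hy : ρ.y ∈ π.pair := by simp [hπ]
  intro t
  rcases ZMod.three_cases t with rfl | rfl | rfl <;>
    simp [hρ, π.x_not_mem, π.y_not_mem, π.x_ne_of_mem_pair hx, π.y_ne_of_mem_pair hy]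

lemma PlusCompat.compatible {π ρ : Pattern} (h : PlusCompat π ρ) : π.Compatible 1 ρ := by
  intro t
  rcases h with rfl | ⟨u, hu, v, hv, -, hp, hx, hy⟩
  · exact ρ.disjoint_part (by decide +revert)
  rcases ZMod.three_cases t with rfl | rfl | rfl <;> reduce_mod_char <;>
    simp [hp, hx, hy, π.x_not_mem, π.x_ne_y, π.x_ne_of_mem_pair hu, π.y_ne_of_mem_pair hv]

lemma PlusCompat.compatible_two {π ρ : Pattern} (h : PlusCompat ρ π) : π.Compatible 2 ρ := by
  intro t
  rcases h with rfl | ⟨u, hu, v, hv, -, hp, hx, hy⟩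
  · exact π.disjoint_part (by decide +revert)
  rcases ZMod.three_cases t with rfl | rfl | rfl <;> reduce_mod_char <;>
    simp [hp, hx, hy, ρ.x_not_mem, ρ.x_ne_y, ρ.x_ne_of_mem_pair hu,
      (ρ.y_ne_of_mem_pair hv).symm]

lemma IsStroll.exists_compatible_cons {s : ZMod 3} {σ : List (ZMod 3)} {π τ : Pattern}
    (h : IsStroll (s :: σ) π τ) : ∃ ρ, π.Compatible s ρ ∧ IsStroll σ ρ τ := by
  cases h with
  | zero hc h => exact ⟨_, hc.compatible, h⟩
  | plus hc h => exact ⟨_, hc.compatible, h⟩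
  | minus hc h => exact ⟨_, hc.compatible_two, h⟩

lemma IsStroll.exists_compatible_seq {n : ℕ} {s : Fin n → ZMod 3} {π τ : Pattern}
    (h : IsStroll (List.ofFn s) π τ) :
    ∃ P : ℕ → Pattern, P 0 = π ∧ P n = τ ∧
      ∀ i : Fin n, (P i).Compatible (s i) (P (i + 1)) := by
  induction n generalizing π with
  | zero =>
    obtain rfl : π = τ := by cases h; rfl
    exact ⟨fun _ => π, rfl, rfl, fun i => i.elim0⟩
  | succ n ih =>
    rw [List.ofFn_succ] at h
    obtain ⟨ρ, hπρ, h⟩ := h.exists_compatible_cons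
    obtain ⟨P, h0, hn, hP⟩ := ih h
    refine ⟨fun | 0 => π | k + 1 => P k, rfl, hn, Fin.cases ?_ fun i => ?_⟩
    · simpa [h0] using hπρ
    · simpa using hP i

theorem SimpleGraph.nonempty_coloring_replicateSet {V α : Type} {G : SimpleGraph V} {W : Set V}
    (f : V → Finset α) (hadj : ∀ u v, G.Adj u v → Disjoint (f u) (f v))
    (hne : ∀ v, (f v).Nonempty) (hW : ∀ v ∈ W, 1 < (f v).card) :
    Nonempty ((G.replicateSet W).Coloring α) := by
  choose a ha using hne
  choose b hb hba using fun v : W => (f v).exists_mem_ne (hW v v.2) (a v)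
  have distinct {u v : V} (h : Disjoint (f u) (f v)) {c d : α} (hc : c ∈ f u) (hd : d ∈ f v) :
      c ≠ d :=
    Finset.disjoint_iff_ne.mp h c hc d hd
  refine ⟨.mk (Sum.elim a b) ?_⟩
  rintro (u | u) (v | v) huv
  · exact distinct (hadj u v huv) (ha u) (ha v)
  · rcases huv with huv | rfl
    · exact distinct (hadj _ _ huv) (ha u) (hb v)
    · exact (hba v).symm
  · rcases huv with huv | h
    · exact distinct (hadj _ _ huv) (hb u) (ha v)
    · simp only [Sum.elim_inr, Sum.elim_inl, ← h]
      exact hba u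
  · exact distinct (hadj _ _ huv) (hb u) (hb v)

lemma Hgraph.rel_of_adj {n : ℕ} {R : Fin n × ZMod 3 → Fin n × ZMod 3 → Prop}
    (hR : ∀ u v, R u v → R v u) (hcol : ∀ i j j', j ≠ j' → R (i, j) (i, j'))
    (hrow : ∀ i i' : Fin n, (i : ℕ) + 1 = i' → ∀ j, R (i, j) (i', j))
    (htwist : ∀ i i' : Fin n, (i : ℕ) = 0 → (i' : ℕ) = n - 1 → ∀ j, R (i, j) (i', -j))
    (u v : Fin n × ZMod 3) (h : (Hgraph n).Adj u v) : R u v := by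
  have key : ∀ {u v : Fin n × ZMod 3}, (u.1 = v.1 ∧ u.2 ≠ v.2) ∨
      ((u.1 : ℕ) + 1 = v.1 ∧ u.2 = v.2) ∨
      ((u.1 : ℕ) = 0 ∧ (v.1 : ℕ) = n - 1 ∧ v.2 = -u.2) → R u v := by
    rintro ⟨i, j⟩ ⟨i', j'⟩ (⟨rfl, h⟩ | ⟨h, rfl⟩ | ⟨hi, hi', rfl⟩)
    exacts [hcol i j j' h, hrow i i' h j, htwist i i' hi hi' j]
  rcases (SimpleGraph.fromRel_adj _ _ _).mp h with ⟨-, h | h⟩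
  exacts [key h, hR _ _ (key h)]

lemma goodEnd_part_neg : ∀ t : ZMod 3, goodEnd.part (-t) = basePattern.part t := by
  decide

namespace Pattern.Compatible

variable {π ρ : Pattern}

lemma disjoint_part_sub {a b : ZMod 3} (h : π.Compatible (b - a) ρ) (j : ZMod 3) :
    Disjoint (π.part (j - a)) (ρ.part (j - b)) := by
  simpa only [sub_sub_sub_cancel_right] using h (j - a)

lemma disjoint_basePattern_part {a b : ZMod 3} (h : π.Compatible (-a - b) goodEnd)
    (j : ZMod 3) : Disjoint (basePattern.part (j - a)) (π.part (-j - b)) := by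
  have := h (-j - b)
  rwa [show -j - b - (-a - b) = -(j - a) by ring, goodEnd_part_neg, disjoint_comm] at this

end Pattern.Compatible

/-- Let `W ⊆ V(H n)` consist of exactly one vertex `(i, w i)` from each column.
If the associated sign sequence `σ^W` (with `s i = w (i+1) - w i` for
`i ≤ n - 2` and `s (n-1) = -(w 0) - w (n-1)`) is good, then the replicated
graph `H n (W)` is 4-colourable. -/
theorem colorable_of_goodSeq (n : ℕ) (w : Fin n → ZMod 3)
    (hgood : GoodSeq (List.ofFn (fun i : Fin n =>
      if h : (i : ℕ) + 1 < n then w ⟨(i : ℕ) + 1, h⟩ - w i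
      else -(w ⟨0, by omega⟩) - w i))) :
    ((Hgraph n).replicateSet {v : Fin n × ZMod 3 | v.2 = w v.1}).Colorable 4 := by
  obtain ⟨P, hP0, hPn, hP⟩ := hgood.exists_compatible_seq
  let f (v : Fin n × ZMod 3) := (P v.1).part (v.2 - w v.1)
  have hrow (i i' : Fin n) (hi : (i : ℕ) + 1 = i') (j : ZMod 3) :
      Disjoint (f (i, j)) (f (i', j)) := by
    obtain ⟨_, hi'⟩ := i'
    subst hi
    have h := hP i
    simp only [dif_pos hi'] at h
    exact h.disjoint_part_sub j
  have htwist (i i' : Fin n) (hi : (i : ℕ) = 0) (hi' : (i' : ℕ) = n - 1) (j : ZMod 3) :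
      Disjoint (f (i, j)) (f (i', -j)) := by
    obtain ⟨_, _⟩ := i
    subst hi
    have h := hP i'
    rw [dif_neg (by omega), show P (i' + 1) = goodEnd by rw [← hPn]; congr; omega] at h
    have := h.disjoint_basePattern_part j
    rwa [← hP0] at this
  obtain ⟨c⟩ := SimpleGraph.nonempty_coloring_replicateSet (W := {v | v.2 = w v.1}) f
    (Hgraph.rel_of_adj (fun _ _ h => Disjoint.symm h)
      (fun i _ _ h => (P i).disjoint_part (sub_left_injective.ne h)) hrow htwist)
    (fun _ => Pattern.part_nonempty _ _)
    (fun v hv => by simp [f, show v.2 = w v.1 from hv, Pattern.pair_card])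
  simpa only [Fintype.card_fin] using c.colorable
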